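/- (Hook-content type product formula at q=ξ=1) With Z_N = S^N ∏_{i=0}^{N-1}(x+i) and K_λ = det(Z_{λ_i+2n-i-j})_{i,j=1}^n / det(Z_{2n-i-j})_{i,j=1}^n, one has for every partition λ = (λ_1,...,λ_n): K_λ = S^|λ| · ∏_{z∈λ} (x + h(z) - 1) · ∏_{1≤i<j≤n} [(x + λ_i - λ_j + j - i - 1)(λ_i - λ_j + j - i)] / [(x + j - i - 1)(j - i)], where h(z) is the hook length of cell z in the Young diagram of λ and |λ| = Σ λ_i. -/

import Mathlib

noncomputable section
namespace Stmt16

/-- The field of rational functions `ℚ(S, x)`. -/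
abbrev K : Type := FractionRing (MvPolynomial (Fin 2) ℚ)

def S : K := algebraMap (MvPolynomial (Fin 2) ℚ) K (MvPolynomial.X 0)
def x : K := algebraMap (MvPolynomial (Fin 2) ℚ) K (MvPolynomial.X 1)

/-- `Z_N = S^N ∏_{i=0}^{N-1} (x+i)`. -/
def Z (N : ℕ) : K := S ^ N * ∏ i ∈ Finset.range N, (x + (i : K))

/-- For a partition `μ = (μ_1,…,μ_m)` (0-indexed),
`K_μ = det(Z_{μ_i+2m-i-j})_{i,j=1}^m / det(Z_{2m-i-j})_{i,j=1}^m`. -/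
def Kmom (m : ℕ) (μ : Fin m → ℕ) : K :=
  (Matrix.of fun i j : Fin m => Z (μ i + (2 * m - 2 - (i : ℕ) - (j : ℕ)))).det /
    (Matrix.of fun i j : Fin m => Z (2 * m - 2 - (i : ℕ) - (j : ℕ))).det

/-- `h(z) - 1` for the cell `z` in (0-indexed) row `i` and column `j` of the Young
diagram of `λ`: the hook length is `arm + leg + 1` where `arm = λ_i - j - 1` and
`leg = #{k > i | λ_k > j}`. -/
def hookm1 (n : ℕ) (lam : Fin n → ℕ) (i : Fin n) (j : ℕ) : ℕ :=
  (lam i - 1 - j) + (Finset.univ.filter (fun k : Fin n => i < k ∧ j < lam k)).card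

/-!
Write `μ_i = λ_i + n - 1 - i`. Since `Z_{a+k} = Z_a · S^k · (x+a)(x+a+1)⋯(x+a+k-1)` and the
rising factorial is a monic polynomial of degree `k` in `x + a`, the matrix
`(Z_{μ_i + n-1-j})` is a row scaling and a column scaling of a matrix of monic polynomials
evaluated at `x + μ_i`, so its determinant is `∏ Z_{μ_i} · ∏ S^j · ∏_{i<k} (μ_i - μ_k)`.
The empty partition gives the denominator. What remains is Frobenius' hook lemma: for each row
`i`, the numbers `h(i,j) - 1` (`j < λ_i`) and `μ_i - μ_k - 1` (`k > i`) are exactly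
`0, 1, …, μ_i - 1`, so `∏_{t<μ_i} (x+t)` splits into the hook factors of row `i` and the factors
`x + μ_i - μ_k - 1` of the pair product.
-/

open Finset Polynomial Matrix

theorem ascPochhammer_eval_eq_prod_range {R : Type*} [CommSemiring R] (n : ℕ) (r : R) :
    (ascPochhammer R n).eval r = ∏ i ∈ range n, (r + i) := by
  induction n with
  | zero => simp
  | succ n ih => simp [ascPochhammer_succ_right, ih, prod_range_succ]

theorem det_eval_rev_matrixOfPolynomials {R : Type*} [CommRing R] {m : ℕ} (v : Fin m → R)
    (p : Fin m → R[X]) (h_deg : ∀ i, (p i).natDegree = i) (h_monic : ∀ i, (p i).Monic) :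
    (of fun i j => (p j.rev).eval (v i)).det = ∏ i : Fin m, ∏ j ∈ Ioi i, (v i - v j) := by
  have hrev (M : Matrix (Fin m) (Fin m) R) :
      (M.submatrix id Fin.revPerm).det = (Equiv.Perm.sign Fin.revPerm : R) * M.det :=
    det_permute' _ _
  calc _ = ((of fun i j => (p j).eval (v i)).submatrix id Fin.revPerm).det := rfl
    _ = ((vandermonde v).submatrix id Fin.revPerm).det := by
      rw [hrev, hrev, det_eval_matrixOfPolynomials_eq_det_vandermonde v p h_deg h_monic]
    _ = (projVandermonde 1 v).det := by
      congr 1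
      ext i j
      simp [projVandermonde_apply]
    _ = _ := by simp [det_projVandermonde]

theorem prod_filter_lt_eq_prod_Ioi {ι M : Type*} [Fintype ι] [LinearOrder ι]
    [LocallyFiniteOrderTop ι] [CommMonoid M] (f : ι → ι → M) :
    ∏ p ∈ univ.filter (fun p : ι × ι => p.1 < p.2), f p.1 p.2 = ∏ i, ∏ j ∈ Ioi i, f i j := by
  rw [prod_filter, Fintype.prod_prod_type]
  refine prod_congr rfl fun i _ => ?_
  rw [← prod_filter, filter_lt_eq_Ioi]

theorem S_ne_zero : S ≠ 0 := by
  rw [S, ne_eq, IsFractionRing.to_map_eq_zero_iff]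
  exact MvPolynomial.X_ne_zero 0

theorem Z_add (a k : ℕ) : Z (a + k) = Z a * (S ^ k * (ascPochhammer K k).eval (x + a)) := by
  simp only [Z, pow_add, prod_range_add, ascPochhammer_eval_eq_prod_range, Nat.cast_add, add_assoc]
  ring

theorem det_Z_add_rev {m : ℕ} (a : Fin m → ℕ) :
    (of fun i j : Fin m => Z (a i + (m - 1 - j))).det =
      (∏ i, Z (a i)) * (∏ j : Fin m, S ^ (j.rev : ℕ)) *
        ∏ i, ∏ j ∈ Ioi i, ((a i : K) - a j) := by
  have hM : (of fun i j : Fin m => Z (a i + (m - 1 - j))) = of fun i j =>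
      Z (a i) * (S ^ (j.rev : ℕ) * (ascPochhammer K j.rev).eval (x + a i)) := by
    ext i j
    rw [of_apply, of_apply, ← Z_add, Fin.val_rev]
    congr 2
    omega
  calc _ = (∏ i, Z (a i)) * ((∏ j : Fin m, S ^ (j.rev : ℕ)) *
        (of fun i j : Fin m => (ascPochhammer K j.rev).eval (x + a i)).det) := by
        rw [hM, ← det_mul_row, ← det_mul_column]
        rfl
    _ = _ := by
      rw [det_eval_rev_matrixOfPolynomials (fun i => x + a i) (fun j => ascPochhammer K j)
        (fun j => ascPochhammer_natDegree _ _) (fun j => monic_ascPochhammer _ _), mul_assoc]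
      simp only [add_sub_add_left_eq_sub]

section Hook

variable {n : ℕ} (lam : Fin n → ℕ) (i : Fin n)

def legLength (j : ℕ) : ℕ := #{k : Fin n | i < k ∧ j < lam k}

-- `μ_i - μ_k - 1` for the shifted parts `μ_k = λ_k + n - 1 - k`
def shiftedGap (k : Fin n) : ℕ := lam i - lam k + (k - i - 1)

theorem hookm1_eq (j : ℕ) : hookm1 n lam i j = lam i - 1 - j + legLength lam i j := rfl

theorem legLength_antitone : Antitone (legLength lam i) := fun _ _ hj =>
  card_le_card fun _ hk => by
    simp only [mem_filter, mem_univ, true_and] at hk ⊢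
    exact ⟨hk.1, hj.trans_lt hk.2⟩

theorem legLength_le (j : ℕ) : legLength lam i j ≤ n - 1 - i :=
  (card_le_card fun _ hk => mem_Ioi.mpr (mem_filter.mp hk).2.1).trans_eq (Fin.card_Ioi i)

variable {lam i}

theorem legLength_le_of_le (hlam : Antitone lam) {j : ℕ} {k : Fin n} (hj : lam k ≤ j) :
    legLength lam i j ≤ k - i - 1 := by
  refine (card_le_card fun k' hk' => ?_).trans_eq (Fin.card_Ioo i k)
  simp only [mem_filter, mem_univ, true_and] at hk'
  exact mem_Ioo.mpr ⟨hk'.1, lt_of_not_ge fun hkk => (hlam hkk).not_gt (hj.trans_lt hk'.2)⟩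

theorem le_legLength_of_lt (hlam : Antitone lam) {j : ℕ} {k : Fin n} (hj : j < lam k) :
    k - i ≤ legLength lam i j := by
  refine (Fin.card_Ioc i k).symm.trans_le (card_le_card fun k' hk' => ?_)
  simp only [mem_filter, mem_univ, true_and]
  exact ⟨(mem_Ioc.mp hk').1, hj.trans_le (hlam (mem_Ioc.mp hk').2)⟩

theorem hookm1_lt {j : ℕ} (hj : j < lam i) : hookm1 n lam i j < lam i + (n - 1 - i) := by
  have := legLength_le lam i j
  rw [hookm1_eq]
  omega

theorem shiftedGap_lt (hlam : Antitone lam) {k : Fin n} (hik : i < k) :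
    shiftedGap lam i k < lam i + (n - 1 - i) := by
  have := hlam hik.le
  have := k.isLt
  have : (i : ℕ) < k := hik
  unfold shiftedGap
  omega

theorem strictAntiOn_hookm1 : StrictAntiOn (hookm1 n lam i) (Set.Iio (lam i)) := by
  intro j _ j' hj' hjj
  have := legLength_antitone lam i hjj.le
  have : j' < lam i := hj'
  rw [hookm1_eq, hookm1_eq]
  omega

theorem strictMonoOn_shiftedGap (hlam : Antitone lam) :
    StrictMonoOn (shiftedGap lam i) (Set.Ioi i) := by
  intro k hk k' _ hkk
  have := hlam hkk.le
  have := hlam (Set.mem_Ioi.mp hk).le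
  have : (i : ℕ) < k := hk
  have : (k : ℕ) < k' := hkk
  unfold shiftedGap
  omega

theorem hookm1_ne_shiftedGap (hlam : Antitone lam) {j : ℕ} (hj : j < lam i) {k : Fin n}
    (hik : i < k) : hookm1 n lam i j ≠ shiftedGap lam i k := by
  have := hlam hik.le
  have : (i : ℕ) < k := hik
  rw [hookm1_eq, shiftedGap]
  rcases le_or_gt (lam k) j with hkj | hjk
  · have := legLength_le_of_le (i := i) hlam hkj
    omega
  · have := le_legLength_of_lt (i := i) hlam hjk
    omega

theorem prod_range_eq_prod_hookm1_mul_prod_shiftedGap {M : Type*} [CommMonoid M]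
    (hlam : Antitone lam) (f : ℕ → M) :
    ∏ t ∈ range (lam i + (n - 1 - i)), f t =
      (∏ j ∈ range (lam i), f (hookm1 n lam i j)) * ∏ k ∈ Ioi i, f (shiftedGap lam i k) := by
  have hinjA : Set.InjOn (hookm1 n lam i) (range (lam i)) := by
    simpa using strictAntiOn_hookm1.injOn
  have hinjB : Set.InjOn (shiftedGap lam i) (Ioi i) := by
    simpa using (strictMonoOn_shiftedGap hlam).injOn
  have hdisj :
      Disjoint ((range (lam i)).image (hookm1 n lam i)) ((Ioi i).image (shiftedGap lam i)) := by
    simp only [disjoint_left, mem_image, mem_range, mem_Ioi, not_exists, not_and]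
    rintro _ ⟨j, hj, rfl⟩ k hik
    exact (hookm1_ne_shiftedGap hlam hj hik).symm
  have hunion : (range (lam i)).image (hookm1 n lam i) ∪ (Ioi i).image (shiftedGap lam i) =
      range (lam i + (n - 1 - i)) := by
    refine eq_of_subset_of_card_le ?_ ?_
    · simp only [union_subset_iff, image_subset_iff, mem_range, mem_Ioi]
      exact ⟨fun j hj => hookm1_lt hj, fun k hik => shiftedGap_lt hlam hik⟩
    · rw [card_union_of_disjoint hdisj, card_image_of_injOn hinjA, card_image_of_injOn hinjB,
        card_range, card_range, Fin.card_Ioi]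
  rw [← hunion, prod_union hdisj, prod_image hinjA, prod_image hinjB]

end Hook

section MomentMatrix

variable {n : ℕ}

def momentMatrix (lam : Fin n → ℕ) : Matrix (Fin n) (Fin n) K :=
  of fun i j => Z (lam i + (2 * n - 2 - i - j))

def hookProduct (lam : Fin n → ℕ) : K :=
  ∏ i, ∏ j ∈ range (lam i), (x + (hookm1 n lam i j : K))

def pairFactor (lam : Fin n → ℕ) (i k : Fin n) : K :=
  (x + ((lam i - lam k : ℕ) : K) + ((k - i - 1 : ℕ) : K)) * ((lam i - lam k + (k - i) : ℕ) : K)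

theorem Kmom_eq_det_div (lam : Fin n → ℕ) :
    Kmom n lam = (momentMatrix lam).det / (momentMatrix (0 : Fin n → ℕ)).det := by
  simp [Kmom, momentMatrix]

theorem hookProduct_zero : hookProduct (0 : Fin n → ℕ) = 1 := by
  simp [hookProduct]

theorem pairFactor_zero (i k : Fin n) :
    pairFactor 0 i k = (x + ((k - i - 1 : ℕ) : K)) * ((k - i : ℕ) : K) := by
  simp [pairFactor]

theorem prod_Z_shifted {lam : Fin n → ℕ} (hlam : Antitone lam) :
    ∏ i : Fin n, Z (lam i + (n - 1 - i)) = S ^ (∑ i, lam i) * (∏ i : Fin n, S ^ (n - 1 - i)) *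
      (hookProduct lam * ∏ i, ∏ k ∈ Ioi i, (x + (shiftedGap lam i k : K))) := by
  simp only [Z, pow_add, prod_mul_distrib, prod_pow_eq_pow_sum, hookProduct,
    prod_range_eq_prod_hookm1_mul_prod_shiftedGap hlam fun t => x + (t : K)]

theorem x_add_shiftedGap_mul_sub {lam : Fin n → ℕ} (hlam : Antitone lam) {i k : Fin n}
    (hik : i < k) :
    (x + (shiftedGap lam i k : K)) *
        (((lam i + (n - 1 - i) : ℕ) : K) - ((lam k + (n - 1 - k) : ℕ) : K)) =
      pairFactor lam i k := by
  have := hlam hik.le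
  have : (i : ℕ) < k := hik
  have hk := k.isLt
  have hsub : lam i + (n - 1 - i) = lam k + (n - 1 - k) + (lam i - lam k + (k - i)) := by omega
  rw [pairFactor, shiftedGap, hsub]
  push_cast
  ring

theorem det_momentMatrix {lam : Fin n → ℕ} (hlam : Antitone lam) :
    (momentMatrix lam).det = (∏ i : Fin n, S ^ (n - 1 - i)) * (∏ j : Fin n, S ^ (j.rev : ℕ)) *
      (S ^ (∑ i, lam i) * hookProduct lam * ∏ i, ∏ k ∈ Ioi i, pairFactor lam i k) := by
  have hshift :
      momentMatrix lam = of fun i j : Fin n => Z ((lam i + (n - 1 - i)) + (n - 1 - j)) := by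
    ext i j
    have := i.isLt
    have := j.isLt
    simp only [momentMatrix, of_apply]
    congr 1
    omega
  have hpair : ∏ i, ∏ k ∈ Ioi i, pairFactor lam i k =
      (∏ i, ∏ k ∈ Ioi i, (x + (shiftedGap lam i k : K))) *
        ∏ i : Fin n, ∏ k ∈ Ioi i,
          (((lam i + (n - 1 - i) : ℕ) : K) - ((lam k + (n - 1 - k) : ℕ) : K)) := by
    simp only [← prod_mul_distrib]
    exact prod_congr rfl fun i _ => prod_congr rfl fun k hk =>
      (x_add_shiftedGap_mul_sub hlam (mem_Ioi.mp hk)).symm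
  rw [hshift, det_Z_add_rev, prod_Z_shifted hlam, hpair]
  ring

end MomentMatrix

/-- Hook-content type product formula at `q = ξ = 1`:
`K_λ = S^|λ| ∏_{z∈λ} (x+h(z)-1) ·
  ∏_{i<j} (x+λ_i-λ_j+j-i-1)(λ_i-λ_j+j-i) / ((x+j-i-1)(j-i))`. -/
theorem stmt16 (n : ℕ) (lam : Fin n → ℕ) (hlam : Antitone lam) :
    Kmom n lam =
      S ^ (∑ i, lam i) *
        (∏ i : Fin n, ∏ j ∈ Finset.range (lam i), (x + (hookm1 n lam i j : K))) *
        ∏ p ∈ Finset.univ.filter (fun p : Fin n × Fin n => p.1 < p.2),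
          (x + ((lam p.1 - lam p.2 : ℕ) : K) + (((p.2 : ℕ) - (p.1 : ℕ) - 1 : ℕ) : K)) *
              (((lam p.1 - lam p.2) + ((p.2 : ℕ) - (p.1 : ℕ)) : ℕ) : K) /
            ((x + (((p.2 : ℕ) - (p.1 : ℕ) - 1 : ℕ) : K)) * (((p.2 : ℕ) - (p.1 : ℕ) : ℕ) : K)) := by
  have hS : (∏ i : Fin n, S ^ (n - 1 - i)) * (∏ j : Fin n, S ^ (j.rev : ℕ)) ≠ 0 := by
    refine mul_ne_zero ?_ ?_ <;> exact prod_ne_zero_iff.mpr fun _ _ => pow_ne_zero _ S_ne_zero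
  calc Kmom n lam = S ^ (∑ i, lam i) * hookProduct lam *
        ((∏ i, ∏ k ∈ Ioi i, pairFactor lam i k) / ∏ i, ∏ k ∈ Ioi i, pairFactor 0 i k) := by
        rw [Kmom_eq_det_div, det_momentMatrix hlam,
          det_momentMatrix (lam := 0) fun _ _ _ => le_rfl]
        simp only [Pi.zero_apply, sum_const_zero, pow_zero, hookProduct_zero, one_mul]
        rw [mul_div_mul_left _ _ hS, mul_div_assoc]
    _ = _ := by
      rw [← prod_filter_lt_eq_prod_Ioi, ← prod_filter_lt_eq_prod_Ioi, ← prod_div_distrib]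
      simp only [hookProduct, pairFactor_zero]
      rfl

end Stmt16
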